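/- Assume each column Xⱼ of X ∈ ℝ^{n×p} satisfies ‖Xⱼ‖₂² = n, that ε ∈ ℝⁿ has independent N(0, σ²) coordinates for some σ > 0, and that y = Xβ* + ε. For any L > 0, let β̌_λ be any minimizer over β ∈ ℝᵖ of the organic lasso objective (1/n)·‖y − Xβ‖₂² + 2λ·‖β‖₁² with λ = √((2·log p + 2L)/n). Then, with probability at least 1 − e^{−L}, (1/n)·‖Xβ̌_λ − Xβ*‖₂² ≤ (σ² + 4·‖β*‖₁²)·√((2·log p + 2L)/n). -/

import Mathlib

/-!
The minimality of `β̌` against `β*` gives the basic inequality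
`‖X(β̌ - β*)‖²/n ≤ 2⟨Xᵀε, β̌ - β*⟩/n + 2λ(‖β*‖₁² - ‖β̌‖₁²)`.
On the event `‖Xᵀε‖_∞ ≤ nσλ` the cross term is at most `2σλ(‖β̌‖₁ + ‖β*‖₁)`, and completing
squares in `‖β̌‖₁` and `‖β*‖₁` bounds the right side by `λ(σ² + 4‖β*‖₁²)`.
Each `(Xᵀε)ⱼ` is `N(0, nσ²)`, and the Gaussian tail `P(|Z| ≥ t) ≤ exp(-t²/(2v))` with
`t = nσλ` makes the union bound over the `p` coordinates equal to `p·exp(-(log p + L)) ≤ e^{-L}`.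
-/

open MeasureTheory ProbabilityTheory Matrix
open scoped ENNReal

noncomputable section

/-- squared Euclidean norm on ℝⁿ -/
def l2sq {n : ℕ} (v : Fin n → ℝ) : ℝ := ∑ i, (v i) ^ 2

/-- ℓ₁ norm on ℝᵖ -/
def l1 {p : ℕ} (b : Fin p → ℝ) : ℝ := ∑ j, |b j|

/-- sup norm on ℝᵖ -/
def linf {p : ℕ} (v : Fin p → ℝ) : ℝ := ⨆ j, |v j|


open Real Set
open scoped NNReal

namespace ProbabilityTheory

section GaussianTail

variable {v : ℝ≥0}

lemma gaussianReal_zero_Ici_zero (hv : v ≠ 0) : gaussianReal 0 v (Ici 0) = 2⁻¹ := by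
  set μ := gaussianReal 0 v
  have hsymm : μ (Iic 0) = μ (Ici 0) := by
    have hneg : μ.map (fun x ↦ -x) = μ := by rw [gaussianReal_map_neg, neg_zero]
    have hpre : Iic (0 : ℝ) = (fun x ↦ -x) ⁻¹' Ici 0 := by ext; simp
    rw [hpre, ← Measure.map_apply measurable_neg measurableSet_Ici, hneg]
  have hatom : μ {0} = 0 := gaussianReal_absolutelyContinuous 0 hv (volume_singleton)
  have htwo : μ (Ici 0) * 2 = 1 := by
    have := measure_union_add_inter (μ := μ) (Ici (0 : ℝ)) (measurableSet_Iic (a := 0))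
    rw [Ici_union_Iic, Ici_inter_Iic, Icc_self, hatom, measure_univ, add_zero, hsymm] at this
    rw [mul_two, ← this]
  exact ENNReal.eq_inv_of_mul_eq_one_left htwo

lemma gaussianPDFReal_zero_le_mul {t x : ℝ} (ht : 0 ≤ t) (hx : t ≤ x) :
    gaussianPDFReal 0 v x ≤ exp (-t ^ 2 / (2 * v)) * gaussianPDFReal t v x := by
  rw [gaussianPDFReal, gaussianPDFReal, mul_left_comm, ← exp_add]
  gcongr
  rw [← add_div]
  gcongr
  nlinarith

lemma gaussianReal_zero_Ici_le (hv : v ≠ 0) {t : ℝ} (ht : 0 ≤ t) :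
    gaussianReal 0 v (Ici t) ≤ ENNReal.ofReal (exp (-t ^ 2 / (2 * v))) * 2⁻¹ := by
  set c := ENNReal.ofReal (exp (-t ^ 2 / (2 * v)))
  have hshift : gaussianReal t v (Ici t) = 2⁻¹ := by
    rw [← zero_add t, ← gaussianReal_map_add_const,
      Measure.map_apply (measurable_add_const t) measurableSet_Ici, zero_add]
    convert gaussianReal_zero_Ici_zero hv using 2
    ext x
    simp
  calc gaussianReal 0 v (Ici t)
      = ∫⁻ x in Ici t, gaussianPDF 0 v x := gaussianReal_apply 0 hv _
    _ ≤ ∫⁻ x in Ici t, c * gaussianPDF t v x := by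
        refine setLIntegral_mono' measurableSet_Ici fun x hx ↦ ?_
        rw [gaussianPDF, gaussianPDF, ← ENNReal.ofReal_mul (exp_nonneg _)]
        exact ENNReal.ofReal_le_ofReal (gaussianPDFReal_zero_le_mul ht hx)
    _ = c * gaussianReal t v (Ici t) := by
        rw [lintegral_const_mul' _ _ ENNReal.ofReal_ne_top, gaussianReal_apply t hv]
    _ = c * 2⁻¹ := by rw [hshift]

lemma gaussianReal_zero_setOf_le_abs_le (hv : v ≠ 0) {t : ℝ} (ht : 0 ≤ t) :
    gaussianReal 0 v {x | t ≤ |x|} ≤ ENNReal.ofReal (exp (-t ^ 2 / (2 * v))) := by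
  have hsplit : {x : ℝ | t ≤ |x|} = Ici t ∪ (fun x ↦ -x) ⁻¹' Ici t := by
    ext x
    simp [le_abs', or_comm]
  have hneg : (gaussianReal 0 v).map (fun x ↦ -x) = gaussianReal 0 v := by
    rw [gaussianReal_map_neg, neg_zero]
  calc gaussianReal 0 v {x | t ≤ |x|}
      ≤ gaussianReal 0 v (Ici t) + gaussianReal 0 v ((fun x ↦ -x) ⁻¹' Ici t) :=
        hsplit ▸ measure_union_le _ _
    _ = gaussianReal 0 v (Ici t) * 2 := by
        rw [← Measure.map_apply measurable_neg measurableSet_Ici, hneg, mul_two]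
    _ ≤ ENNReal.ofReal (exp (-t ^ 2 / (2 * v))) * 2⁻¹ * 2 := by
        gcongr
        exact gaussianReal_zero_Ici_le hv ht
    _ = ENNReal.ofReal (exp (-t ^ 2 / (2 * v))) :=
        ENNReal.inv_mul_cancel_right (by norm_num) (by norm_num)

end GaussianTail

section GaussianSum

variable {ι Ω : Type*} [MeasurableSpace Ω] {P : Measure Ω} [IsProbabilityMeasure P]
  {Y : ι → Ω → ℝ}

lemma iIndepFun.hasLaw_gaussianReal_finsetSum {m : ι → ℝ} {v : ι → ℝ≥0}
    (hindep : iIndepFun Y P) (hY : ∀ i, HasLaw (Y i) (gaussianReal (m i) (v i)) P)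
    (s : Finset ι) :
    HasLaw (∑ i ∈ s, Y i) (gaussianReal (∑ i ∈ s, m i) (∑ i ∈ s, v i)) P := by
  classical
  induction s using Finset.induction_on with
  | empty =>
    simpa [gaussianReal_zero_var] using hasLaw_dirac_of_ae_eq (P := P) (X := (0 : Ω → ℝ))
      (x := 0) (by rfl)
  | insert i s hi ih =>
    rw [Finset.sum_insert hi, Finset.sum_insert hi, Finset.sum_insert hi]
    have hindep_i : IndepFun (Y i) (∑ j ∈ s, Y j) P :=
      (hindep.indepFun_finsetSum_of_notMem₀ (fun j ↦ (hY j).aemeasurable) hi).symm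
    exact ⟨(hY i).aemeasurable.add ih.aemeasurable,
      gaussianReal_add_gaussianReal_of_indepFun hindep_i (hY i).map_eq ih.map_eq⟩

lemma iIndepFun.hasLaw_gaussianReal_sum_mul [Fintype ι] {v : ℝ≥0}
    (hindep : iIndepFun Y P) (hY : ∀ i, HasLaw (Y i) (gaussianReal 0 v) P) (a : ι → ℝ)
    {w : ℝ≥0} (hw : (w : ℝ) = (∑ i, a i ^ 2) * v) :
    HasLaw (fun ω ↦ ∑ i, a i * Y i ω) (gaussianReal 0 w) P := by
  have hscaled : ∀ i, HasLaw (fun ω ↦ a i * Y i ω)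
      (gaussianReal 0 (.mk (a i ^ 2) (sq_nonneg _) * v)) P := fun i ↦ by
    have h := gaussianReal_const_mul (hY i) (a i)
    rwa [mul_zero] at h
  have hsum := (hindep.comp (fun i x ↦ a i * x) fun i ↦ measurable_const_mul (a i))
    |>.hasLaw_gaussianReal_finsetSum hscaled Finset.univ
  convert hsum using 2
  · simp only [Finset.sum_apply, Function.comp_apply]
  · simp
  · ext
    simp [hw, Finset.sum_mul]

end GaussianSum

lemma measure_exists_le_abs_le_of_hasLaw_gaussianReal {ι Ω : Type*} [Fintype ι]
    [MeasurableSpace Ω] {P : Measure Ω} {Z : ι → Ω → ℝ} {v : ℝ≥0} (hv : v ≠ 0)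
    (hZ : ∀ j, HasLaw (Z j) (gaussianReal 0 v) P) {t : ℝ} (ht : 0 ≤ t) :
    P {ω | ∃ j, t ≤ |Z j ω|} ≤ Fintype.card ι * ENNReal.ofReal (exp (-t ^ 2 / (2 * v))) := by
  set c := ENNReal.ofReal (exp (-t ^ 2 / (2 * v)))
  have hmeas : MeasurableSet {x : ℝ | t ≤ |x|} := measurableSet_le measurable_const measurable_abs
  calc P {ω | ∃ j, t ≤ |Z j ω|}
      = P (⋃ j, {ω | t ≤ |Z j ω|}) := by rw [ofPred_exists]
    _ ≤ ∑ j, P {ω | t ≤ |Z j ω|} := measure_iUnion_fintype_le P _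
    _ ≤ ∑ _j : ι, c := by
        gcongr with j
        rw [(hZ j).measure_eq hmeas]
        exact gaussianReal_zero_setOf_le_abs_le hv ht
    _ = Fintype.card ι * c := by rw [Finset.sum_const, Finset.card_univ, nsmul_eq_mul]

end ProbabilityTheory

section OrganicLasso

variable {n p : ℕ}

def organicLassoObjective (X : Matrix (Fin n) (Fin p) ℝ) (y : Fin n → ℝ) (lam : ℝ)
    (β : Fin p → ℝ) : ℝ :=
  (1 / n) * l2sq (y - X *ᵥ β) + 2 * lam * l1 β ^ 2

lemma l1_sub_le (a b : Fin p → ℝ) : l1 (a - b) ≤ l1 a + l1 b := by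
  rw [l1, l1, l1, ← Finset.sum_add_distrib]
  exact Finset.sum_le_sum fun j _ ↦ abs_sub (a j) (b j)

lemma dotProduct_le_mul_l1 {z δ : Fin p → ℝ} {C : ℝ} (hz : ∀ j, |z j| ≤ C) :
    z ⬝ᵥ δ ≤ C * l1 δ := by
  rw [l1, Finset.mul_sum]
  refine Finset.sum_le_sum fun j _ ↦ ?_
  calc z j * δ j ≤ |z j| * |δ j| := by rw [← abs_mul]; exact le_abs_self _
    _ ≤ C * |δ j| := by gcongr; exact hz j

lemma l2sq_sub (a b : Fin n → ℝ) : l2sq (a - b) = l2sq a - 2 * (a ⬝ᵥ b) + l2sq b := by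
  simp only [l2sq, dotProduct, Pi.sub_apply, Finset.mul_sum, ← Finset.sum_sub_distrib,
    ← Finset.sum_add_distrib]
  exact Finset.sum_congr rfl fun i _ ↦ by ring

lemma organicLassoObjective_basic_inequality (X : Matrix (Fin n) (Fin p) ℝ) (lam : ℝ)
    (βstar b : Fin p → ℝ) (e : Fin n → ℝ)
    (hmin : organicLassoObjective X (X *ᵥ βstar + e) lam b
      ≤ organicLassoObjective X (X *ᵥ βstar + e) lam βstar) :
    (1 / n) * l2sq (X *ᵥ b - X *ᵥ βstar)
      ≤ (2 / n) * ((Xᵀ *ᵥ e) ⬝ᵥ (b - βstar)) + 2 * lam * (l1 βstar ^ 2 - l1 b ^ 2) := by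
  have hfit : X *ᵥ βstar + e - X *ᵥ b = e - X *ᵥ (b - βstar) := by
    rw [mulVec_sub]; abel
  have hcross : e ⬝ᵥ (X *ᵥ (b - βstar)) = (Xᵀ *ᵥ e) ⬝ᵥ (b - βstar) := by
    rw [dotProduct_mulVec, mulVec_transpose]
  rw [organicLassoObjective, organicLassoObjective, hfit, add_sub_cancel_left, l2sq_sub,
    hcross] at hmin
  rw [← mulVec_sub]
  linear_combination hmin

lemma organicLasso_prediction_error_le {X : Matrix (Fin n) (Fin p) ℝ} {σ lam : ℝ}
    {βstar b : Fin p → ℝ} {e : Fin n → ℝ} (hn : 0 < n) (hσ : 0 ≤ σ) (hlam : 0 ≤ lam)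
    (hmin : organicLassoObjective X (X *ᵥ βstar + e) lam b
      ≤ organicLassoObjective X (X *ᵥ βstar + e) lam βstar)
    (hnoise : ∀ j, |(Xᵀ *ᵥ e) j| ≤ n * σ * lam) :
    (1 / n) * l2sq (X *ᵥ b - X *ᵥ βstar) ≤ (σ ^ 2 + 4 * l1 βstar ^ 2) * lam := by
  have hcross :
      (2 / n) * ((Xᵀ *ᵥ e) ⬝ᵥ (b - βstar)) ≤ 2 * σ * lam * (l1 b + l1 βstar) := by
    calc (2 / n) * ((Xᵀ *ᵥ e) ⬝ᵥ (b - βstar))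
        ≤ (2 / n) * (n * σ * lam * l1 (b - βstar)) := by
          gcongr
          exact dotProduct_le_mul_l1 hnoise
      _ = 2 * σ * lam * l1 (b - βstar) := by field_simp
      _ ≤ 2 * σ * lam * (l1 b + l1 βstar) := by
          gcongr
          exact l1_sub_le b βstar
  have := organicLassoObjective_basic_inequality X lam βstar b e hmin
  -- the slack in the final bound is `λ ((σ - 2‖b‖₁)² + (σ - 2‖β*‖₁)²) / 2`
  nlinarith [mul_nonneg hlam (sq_nonneg (σ - 2 * l1 b)),
    mul_nonneg hlam (sq_nonneg (σ - 2 * l1 βstar))]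

end OrganicLasso

lemma natCast_mul_exp_neg_log_add_le (p : ℕ) (L : ℝ) :
    (p : ℝ) * exp (-(log p + L)) ≤ exp (-L) := by
  rcases Nat.eq_zero_or_pos p with rfl | hp
  · simp [exp_nonneg]
  · rw [neg_add, exp_add, exp_neg (log p), exp_log (by exact_mod_cast hp), mul_inv_cancel_left₀
      (by positivity)]

/-- slow-rate prediction error bound for the organic lasso with
λ = √((2 log p + 2L)/n). -/
theorem organic_lasso_prediction_bound {n p : ℕ} (hn : 0 < n)
    (X : Matrix (Fin n) (Fin p) ℝ) (hX : ∀ j, ∑ i, (X i j)^2 = (n : ℝ))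
    (σ : ℝ) (hσ : 0 < σ)
    {Ω : Type} [MeasureSpace Ω] [IsProbabilityMeasure (ℙ : Measure Ω)]
    (ε : Ω → Fin n → ℝ)
    (hmeas : ∀ i, Measurable (fun ω => ε ω i))
    (hgauss : ∀ i, Measure.map (fun ω => ε ω i) ℙ = gaussianReal 0 ⟨σ^2, sq_nonneg σ⟩)
    (hindep : iIndepFun (fun i ω => ε ω i) ℙ)
    (βstar : Fin p → ℝ) (y : Ω → Fin n → ℝ)
    (hy : ∀ ω, y ω = X.mulVec βstar + ε ω)
    (L : ℝ) (hL : 0 < L)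
    (lam : ℝ) (hlam : lam = Real.sqrt ((2*Real.log p + 2*L)/n))
    (βc : Ω → Fin p → ℝ)
    (hβc : ∀ ω (β : Fin p → ℝ),
      (1/n) * l2sq (y ω - X.mulVec (βc ω)) + 2*lam * (l1 (βc ω))^2
        ≤ (1/n) * l2sq (y ω - X.mulVec β) + 2*lam * (l1 β)^2) :
    1 - ENNReal.ofReal (Real.exp (-L))
      ≤ ℙ {ω | (1/n) * l2sq (X.mulVec (βc ω) - X.mulVec βstar)
          ≤ (σ^2 + 4*(l1 βstar)^2) * Real.sqrt ((2*Real.log p + 2*L)/n)} := by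
  have hlam0 : 0 ≤ lam := hlam ▸ sqrt_nonneg _
  have hlam_sq : lam ^ 2 = (2 * log p + 2 * L) / n := by
    rw [hlam, sq_sqrt (by have := log_natCast_nonneg p; positivity)]
  set v : ℝ≥0 := ⟨n * σ ^ 2, by positivity⟩
  have hv_coe : (v : ℝ) = n * σ ^ 2 := rfl
  have hv : v ≠ 0 := by
    rw [← NNReal.coe_ne_zero, hv_coe]
    positivity
  have hZ : ∀ j, HasLaw (fun ω ↦ (Xᵀ *ᵥ ε ω) j) (gaussianReal 0 v) ℙ := fun j ↦
    hindep.hasLaw_gaussianReal_sum_mul (fun i ↦ ⟨(hmeas i).aemeasurable, hgauss i⟩)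
      (fun i ↦ X i j) (by rw [hX j]; rfl)
  set bad := {ω | ∃ j, n * σ * lam ≤ |(Xᵀ *ᵥ ε ω) j|}
  have hbad : ℙ bad ≤ ENNReal.ofReal (exp (-L)) := by
    have hexponent : -(n * σ * lam) ^ 2 / (2 * v) = -(log p + L) := by
      rw [hv_coe, mul_pow, hlam_sq]
      field_simp
    refine (measure_exists_le_abs_le_of_hasLaw_gaussianReal hv hZ (by positivity)).trans ?_
    rw [Fintype.card_fin, hexponent, ← ENNReal.ofReal_natCast,
      ← ENNReal.ofReal_mul (Nat.cast_nonneg p)]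
    exact ENNReal.ofReal_le_ofReal (natCast_mul_exp_neg_log_add_le p L)
  have hgood : badᶜ ⊆ {ω | (1/n) * l2sq (X.mulVec (βc ω) - X.mulVec βstar)
      ≤ (σ^2 + 4*(l1 βstar)^2) * Real.sqrt ((2*Real.log p + 2*L)/n)} := by
    intro ω hω
    simp only [bad, mem_compl_iff, mem_ofPred_eq, not_exists, not_le] at hω
    rw [mem_ofPred_eq, ← hlam]
    exact organicLasso_prediction_error_le hn hσ.le hlam0 (hy ω ▸ hβc ω βstar)
      fun j ↦ (hω j).le
  calc 1 - ENNReal.ofReal (exp (-L)) ≤ 1 - ℙ bad := tsub_le_tsub_left hbad _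
    _ ≤ ℙ badᶜ := tsub_le_iff_left.2 (measure_univ (μ := ℙ).symm.trans_le
        (measure_univ_le_add_compl bad))
    _ ≤ _ := measure_mono hgood
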